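/- Every finite multi-objective Markov game has at least one Pareto Correlated Equilibrium. -/

import Mathlib

open Finset

/-- A finite-horizon `N`-player multi-objective Markov game with `M` objectives,
horizon `H`, finite state space `S` and finite action sets `A j`. -/
structure MOMG (N M H : ℕ) (S : Type) (A : Fin N → Type) [Fintype S]
    [∀ j, Fintype (A j)] where
  /-- transition kernels `P_h : S × A → Δ(S)` -/
  P : Fin H → S → ((j : Fin N) → A j) → S → ℝ
  P_nonneg : ∀ h s a s', 0 ≤ P h s a s'
  P_sum_one : ∀ h s a, ∑ s', P h s a s' = 1
  /-- vector rewards `r_{j,h} : S × A → [0,1]^M` -/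
  r : Fin N → Fin H → S → ((j : Fin N) → A j) → Fin M → ℝ
  r_nonneg : ∀ j h s a i, 0 ≤ r j h s a i
  r_le_one : ∀ j h s a i, r j h s a i ≤ 1

variable {N M H : ℕ} {S : Type} {A : Fin N → Type} [Fintype S] [∀ j, Fintype (A j)]

/-- A Markov stochastic policy: a decision rule `S → Δ(α)` for each step. -/
def IsPolicy {H : ℕ} {S α : Type} [Fintype α] (ρ : Fin H → S → α → ℝ) : Prop :=
  ∀ h s, (∀ a, 0 ≤ ρ h s a) ∧ ∑ a, ρ h s a = 1

/-- A product policy: each agent plays a Markov stochastic policy. -/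
def IsProductPolicy (π : (j : Fin N) → Fin H → S → A j → ℝ) : Prop :=
  ∀ j, IsPolicy (π j)

/-- Value vector of agent `k` under the product policy `π`, computed by backward
recursion on the number `t` of remaining steps; step index is `H - t`. -/
noncomputable def Vvec (G : MOMG N M H S A) (k : Fin N)
    (π : (j : Fin N) → Fin H → S → A j → ℝ) : ℕ → S → Fin M → ℝ
  | 0, _, _ => 0
  | (t+1), s, i =>
    if ht : H - (t+1) < H then
      ∑ a : (j : Fin N) → A j, (∏ j, π j ⟨H - (t+1), ht⟩ s (a j)) *
        (G.r k ⟨H - (t+1), ht⟩ s a i +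
          ∑ s', G.P ⟨H - (t+1), ht⟩ s a s' * Vvec G k π t s' i)
    else 0

/-- `V_{k,1}^π(s_1) ∈ ℝ^M`. -/
noncomputable def ValueVec (G : MOMG N M H S A) (k : Fin N)
    (π : (j : Fin N) → Fin H → S → A j → ℝ) (s1 : S) : Fin M → ℝ :=
  fun i => Vvec G k π H s1 i

/-- `u` Pareto dominates `v`. -/
def ParetoDom {M : ℕ} (u v : Fin M → ℝ) : Prop :=
  (∀ i, v i ≤ u i) ∧ ∃ i, v i < u i

/-- `u` strictly Pareto dominates `v`. -/
def StrictParetoDom {M : ℕ} (u v : Fin M → ℝ) : Prop :=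
  ∀ i, v i < u i

/-- the closed probability simplex Δ_M -/
def InSimplex {M : ℕ} (l : Fin M → ℝ) : Prop :=
  (∀ i, 0 ≤ l i) ∧ ∑ i, l i = 1

/-- the relative interior Δ_M^o of the simplex -/
def InOpenSimplex {M : ℕ} (l : Fin M → ℝ) : Prop :=
  (∀ i, 0 < l i) ∧ ∑ i, l i = 1

/-- Pareto-Nash Equilibrium: no agent has a unilateral (Markov stochastic)
deviation whose value vector Pareto dominates its value under `π`. -/
def IsPNE (G : MOMG N M H S A) (s1 : S)
    (π : (j : Fin N) → Fin H → S → A j → ℝ) : Prop :=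
  ∀ k, ∀ ρ : Fin H → S → A k → ℝ, IsPolicy ρ →
    ¬ ParetoDom (ValueVec G k (Function.update π k ρ) s1) (ValueVec G k π s1)

/-- Weak Pareto-Nash Equilibrium: no unilateral deviation strictly Pareto
dominates. -/
def IsWPNE (G : MOMG N M H S A) (s1 : S)
    (π : (j : Fin N) → Fin H → S → A j → ℝ) : Prop :=
  ∀ k, ∀ ρ : Fin H → S → A k → ℝ, IsPolicy ρ →
    ¬ StrictParetoDom (ValueVec G k (Function.update π k ρ) s1) (ValueVec G k π s1)

/-- Nash equilibrium of the linearly scalarized game `G_Λ`. -/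
def IsScalarizedNE (G : MOMG N M H S A) (s1 : S) (lam : Fin N → Fin M → ℝ)
    (π : (j : Fin N) → Fin H → S → A j → ℝ) : Prop :=
  ∀ k, ∀ ρ : Fin H → S → A k → ℝ, IsPolicy ρ →
    ∑ i, lam k i * ValueVec G k (Function.update π k ρ) s1 i ≤
      ∑ i, lam k i * ValueVec G k π s1 i
/-- Histories: `Hist S JA h` records `s_1, a_1, s_2, …, a_h, s_{h+1}` (the
history available at step `h+1`, 0-indexed: `Hist S JA 0 = S`). -/
def Hist (S JA : Type) : ℕ → Type
  | 0 => S
  | h + 1 => Hist S JA h × JA × S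

/-- The current (last) state of a history. -/
def lastState {S JA : Type} : (h : ℕ) → Hist S JA h → S
  | 0, s => s
  | _ + 1, x => x.2.2

/-- A history-dependent joint (possibly correlated) policy: at each step `h` it
assigns a distribution over joint actions given the history. -/
def IsHistJointPolicy
    (σ : (h : Fin H) → Hist S ((j : Fin N) → A j) h.1 → ((j : Fin N) → A j) → ℝ) :
    Prop :=
  ∀ h hist, (∀ a, 0 ≤ σ h hist a) ∧ ∑ a, σ h hist a = 1

/-- Value vector of agent `j` under a history-dependent joint policy `σ`,
from a history of length `h`. -/
noncomputable def VvecH (G : MOMG N M H S A) (j : Fin N)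
    (σ : (h : Fin H) → Hist S ((j' : Fin N) → A j') h.1 → ((j' : Fin N) → A j') → ℝ) :
    (h : ℕ) → Hist S ((j' : Fin N) → A j') h → Fin M → ℝ := fun h hist i =>
  if hlt : h < H then
    ∑ a : (j' : Fin N) → A j', σ ⟨h, hlt⟩ hist a *
      (G.r j ⟨h, hlt⟩ (lastState h hist) a i +
        ∑ s', G.P ⟨h, hlt⟩ (lastState h hist) a s' *
          VvecH G j σ (h + 1) (hist, a, s') i)
  else 0
termination_by h => H - h

/-- The history-dependent joint policy induced by a Markov product policy. -/
def toHistPolicy (π : (j : Fin N) → Fin H → S → A j → ℝ) :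
    (h : Fin H) → Hist S ((j : Fin N) → A j) h.1 → ((j : Fin N) → A j) → ℝ :=
  fun h hist a => ∏ j, π j h (lastState h.1 hist) (a j)

/-- A stochastic modification for agent `k`: given the history and the sampled
action of agent `k`, a distribution over replacement actions. -/
def IsModification {k : Fin N}
    (φ : (h : Fin H) → Hist S ((j : Fin N) → A j) h.1 → A k → A k → ℝ) : Prop :=
  ∀ h hist b, (∀ a, 0 ≤ φ h hist b a) ∧ ∑ a, φ h hist b a = 1

/-- The modified joint policy `φ ∘ σ`: sample a joint action from `σ`, then
resample agent `k`'s component according to `φ`. -/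
noncomputable def modifyPolicy (k : Fin N)
    (σ : (h : Fin H) → Hist S ((j : Fin N) → A j) h.1 → ((j : Fin N) → A j) → ℝ)
    (φ : (h : Fin H) → Hist S ((j : Fin N) → A j) h.1 → A k → A k → ℝ) :
    (h : Fin H) → Hist S ((j : Fin N) → A j) h.1 → ((j : Fin N) → A j) → ℝ :=
  fun h hist a => ∑ b : A k, σ h hist (Function.update a k b) * φ h hist b (a k)

/-- A history-dependent stochastic policy for a single agent `k`. -/
def IsHistPolicy {k : Fin N}
    (ρ : (h : Fin H) → Hist S ((j : Fin N) → A j) h.1 → A k → ℝ) : Prop :=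
  ∀ h hist, (∀ a, 0 ≤ ρ h hist a) ∧ ∑ a, ρ h hist a = 1

/-- The joint policy in which agent `k` unilaterally deviates to the
history-dependent policy `ρ` while every other agent `j ≠ k` plays `π j`. -/
noncomputable def deviateHist (k : Fin N)
    (π : (j : Fin N) → Fin H → S → A j → ℝ)
    (ρ : (h : Fin H) → Hist S ((j : Fin N) → A j) h.1 → A k → ℝ) :
    (h : Fin H) → Hist S ((j : Fin N) → A j) h.1 → ((j : Fin N) → A j) → ℝ :=
  fun h hist a =>
    ρ h hist (a k) * ∏ j ∈ Finset.univ.erase k, π j h (lastState h.1 hist) (a j)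

/-! A correlated equilibrium of the one-step game obtained by summing the `M` objectives is
played at every step of a backward induction. Along the resulting joint policy the summed value
of every agent equals the backward-induction value, while no stochastic modification raises it,
since correlated equilibria of the stage games are immune to stochastic modifications. A Pareto
improving modification would strictly raise the summed value.

Correlated equilibria of finite games exist by the argument of Hart and Schmeidler: by the
minimax theorem it suffices to answer every mixture of deterministic deviations, and a product
of stationary distributions of the Markov chains that the mixture induces on each agent's
actions makes every deviation gain vanish. -/

open Matrix Function

theorem exists_mem_stdSimplex_nonneg_vecMul {X Y : Type*} [Fintype X] [Fintype Y] [Nonempty X]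
    (F : Matrix X Y ℝ) (h : ∀ q ∈ stdSimplex ℝ Y, ∃ p ∈ stdSimplex ℝ X, 0 ≤ p ⬝ᵥ F *ᵥ q) :
    ∃ p ∈ stdSimplex ℝ X, 0 ≤ p ᵥ* F := by
  classical
  rcases isEmpty_or_nonempty Y with hY | hY
  · exact ⟨Pi.single (Classical.arbitrary X) 1, single_mem_stdSimplex ℝ _, fun y => isEmptyElim y⟩
  have linear_left (p : X → ℝ) : (fun q => p ⬝ᵥ F *ᵥ q) = toLinearMap₂' ℝ F p := by
    ext q; simp [toLinearMap₂'_apply']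
  have linear_right (q : Y → ℝ) : (fun p => p ⬝ᵥ F *ᵥ q) = (toLinearMap₂' ℝ F).flip q := by
    ext p; simp [toLinearMap₂'_apply']
  obtain ⟨q, hq, p, hp, hsaddle⟩ := Sion.exists_isSaddlePointOn (f := fun q p => p ⬝ᵥ F *ᵥ q)
    ⟨_, single_mem_stdSimplex ℝ (Classical.arbitrary Y)⟩ (convex_stdSimplex ℝ Y)
    (isCompact_stdSimplex ℝ Y)
    (fun p _ => by
      rw [linear_left]
      exact (LinearMap.continuous_of_finiteDimensional _).continuousOn.lowerSemicontinuousOn)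
    (fun p _ => by
      rw [linear_left]
      exact (LinearMap.convexOn _ (convex_stdSimplex ℝ Y)).quasiconvexOn)
    (convex_stdSimplex ℝ X) ⟨_, single_mem_stdSimplex ℝ (Classical.arbitrary X)⟩
    (isCompact_stdSimplex ℝ X)
    (fun q _ => by
      rw [linear_right]
      exact (LinearMap.continuous_of_finiteDimensional _).continuousOn.upperSemicontinuousOn)
    (fun q _ => by
      rw [linear_right]
      exact (LinearMap.concaveOn _ (convex_stdSimplex ℝ X)).quasiconcaveOn)
  obtain ⟨p', hp', hnonneg⟩ := h q hq
  refine ⟨p, hp, fun y => ?_⟩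
  have := hnonneg.trans (hsaddle _ (single_mem_stdSimplex ℝ y) p' hp')
  simpa [mulVec_single_one, dotProduct_comm, vecMul, dotProduct] using this

theorem exists_mem_stdSimplex_vecMul_eq_smul {α : Type*} [Fintype α] [Nonempty α]
    (Q : Matrix α α ℝ) (m : ℝ) (hQ : ∀ i j, 0 ≤ Q i j) (hrow : ∀ i, ∑ j, Q i j = m) :
    ∃ μ ∈ stdSimplex ℝ α, μ ᵥ* Q = m • μ := by
  classical
  obtain ⟨μ, hμ, hflow⟩ := exists_mem_stdSimplex_nonneg_vecMul (Q - m • 1) fun q hq => by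
    -- the inflow into a state where `q` is minimal is at least its outflow
    obtain ⟨i, -, hi⟩ := exists_min_image univ q univ_nonempty
    refine ⟨Pi.single i 1, single_mem_stdSimplex ℝ i, ?_⟩
    have : ∑ j, Q i j * q i ≤ ∑ j, Q i j * q j :=
      sum_le_sum fun j _ => mul_le_mul_of_nonneg_left (hi j (mem_univ j)) (hQ i j)
    rw [single_one_dotProduct, sub_mulVec, smul_mulVec, one_mulVec]
    simpa [mulVec, dotProduct, ← sum_mul, hrow] using this
  refine ⟨μ, hμ, ?_⟩
  have hsum : ∑ j, (μ ᵥ* (Q - m • 1)) j = 0 := by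
    simp only [vecMul_sub, vecMul_smul, vecMul_one, Pi.sub_apply, Pi.smul_apply, smul_eq_mul,
      sum_sub_distrib, ← mul_sum, hμ.2]
    simp [vecMul, dotProduct, sum_comm (γ := α), ← mul_sum, hrow, ← sum_mul, hμ.2]
  have hzero := (Fintype.sum_eq_zero_iff_of_nonneg hflow).1 hsum
  rwa [vecMul_sub, vecMul_smul, vecMul_one, sub_eq_zero] at hzero

theorem sum_mul_eq_sum_prod_mul {β γ : Type*} [Fintype β] [DecidableEq β] [Fintype γ]
    (φ : β → γ → ℝ) (hφ : ∀ b, ∑ c, φ b c = 1) (b : β) (F : γ → ℝ) :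
    ∑ c, φ b c * F c = ∑ g : β → γ, (∏ b', φ b' (g b')) * F (g b) := by
  calc ∑ c, φ b c * F c = ∏ b', ∑ c, φ b' c * if b' = b then F c else 1 := by
        rw [← mul_prod_erase univ _ (mem_univ b), prod_eq_one fun b' hb' => ?_]
        · simp
        · simp [(mem_erase.1 hb').1, hφ]
    _ = ∑ g : β → γ, (∏ b', φ b' (g b')) * F (g b) := by
        rw [Fintype.prod_sum]
        refine sum_congr rfl fun g _ => ?_
        rw [prod_mul_distrib, prod_ite_eq' univ b fun b' => F (g b')]
        simp

section NormalFormGame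

variable {ι : Type*} [DecidableEq ι] {α : ι → Type*} [∀ i, Fintype (α i)]

/-- `φ ∘ q`: agent `k`'s component of a draw from `q` is resampled from `φ`. -/
def resample (k : ι) (q : ((i : ι) → α i) → ℝ) (φ : α k → α k → ℝ) : ((i : ι) → α i) → ℝ :=
  fun a => ∑ b, q (update a k b) * φ b (a k)

theorem resample_nonneg {k : ι} {q : ((i : ι) → α i) → ℝ} {φ : α k → α k → ℝ}
    (hq : ∀ a, 0 ≤ q a) (hφ : ∀ b c, 0 ≤ φ b c) (a : (i : ι) → α i) : 0 ≤ resample k q φ a :=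
  sum_nonneg fun _ _ => mul_nonneg (hq _) (hφ _ _)

variable [Fintype ι]

theorem sum_resample_mul (k : ι) (q : ((i : ι) → α i) → ℝ) (φ : α k → α k → ℝ)
    (F : ((i : ι) → α i) → ℝ) :
    ∑ a, resample k q φ a * F a = ∑ a, q a * ∑ c, φ (a k) c * F (update a k c) := by
  simp only [resample, sum_mul, mul_sum, ← Fintype.sum_prod_type']
  refine Fintype.sum_equiv
    { toFun := fun p => (update p.1 k p.2, p.1 k)
      invFun := fun p => (update p.1 k p.2, p.1 k)
      left_inv := fun p => by simp
      right_inv := fun p => by simp } _ _ fun p => ?_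
  simp only [Equiv.coe_fn_mk, update_idem, update_eq_self, update_self, mul_assoc]

theorem resample_prod_of_vecMul_eq_smul (μ : (i : ι) → α i → ℝ) {k : ι}
    {T : Matrix (α k) (α k) ℝ} {m : ℝ} (hμ : μ k ᵥ* T = m • μ k) :
    resample k (fun a => ∏ i, μ i (a i)) T = m • fun a => ∏ i, μ i (a i) := by
  ext a
  have := congrFun hμ (a k)
  simp only [vecMul, dotProduct, Pi.smul_apply, smul_eq_mul] at this
  simp only [resample, apply_update (fun i => μ i) a k, prod_update_of_mem (mem_univ k),
    Pi.smul_apply, smul_eq_mul]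
  rw [prod_eq_mul_prod_sdiff_singleton_of_mem (mem_univ k), ← mul_assoc, ← this, sum_mul]
  exact sum_congr rfl fun _ _ => by ring

def IsCorrelatedEquilibrium (u : ι → ((i : ι) → α i) → ℝ) (q : ((i : ι) → α i) → ℝ) : Prop :=
  q ∈ stdSimplex ℝ ((i : ι) → α i) ∧
    ∀ k (g : α k → α k), ∑ a, q a * u k (update a k (g (a k))) ≤ ∑ a, q a * u k a

theorem IsCorrelatedEquilibrium.sum_resample_mul_le {u : ι → ((i : ι) → α i) → ℝ}
    {q : ((i : ι) → α i) → ℝ} (hq : IsCorrelatedEquilibrium u q) (k : ι)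
    (φ : α k → α k → ℝ) (hφ : ∀ b, φ b ∈ stdSimplex ℝ (α k)) :
    ∑ a, resample k q φ a * u k a ≤ ∑ a, q a * u k a := by
  classical
  -- `φ` is the mixture of the deterministic deviations `g` with weights `∏ b, φ b (g b)`
  calc ∑ a, resample k q φ a * u k a
      = ∑ g : α k → α k, (∏ b, φ b (g b)) * ∑ a, q a * u k (update a k (g (a k))) := by
        simp_rw [sum_resample_mul, sum_mul_eq_sum_prod_mul φ (fun b => (hφ b).2), mul_sum]
        rw [sum_comm]
        exact sum_congr rfl fun g _ => sum_congr rfl fun a _ => by ring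
    _ ≤ ∑ g : α k → α k, (∏ b, φ b (g b)) * ∑ a, q a * u k a :=
        sum_le_sum fun g _ => mul_le_mul_of_nonneg_left (hq.2 k g)
          (prod_nonneg fun b _ => (hφ b).1 _)
    _ = ∑ a, q a * u k a := by
        rw [← sum_mul, ← Fintype.prod_sum, prod_eq_one fun b _ => (hφ b).2, one_mul]

theorem exists_isCorrelatedEquilibrium [∀ i, Nonempty (α i)] (u : ι → ((i : ι) → α i) → ℝ) :
    ∃ q, IsCorrelatedEquilibrium u q := by
  classical
  let F : Matrix ((i : ι) → α i) ((k : ι) × (α k → α k)) ℝ :=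
    fun a d => u d.1 a - u d.1 (update a d.1 (d.2 (a d.1)))
  suffices ∀ w ∈ stdSimplex ℝ _, ∃ p ∈ stdSimplex ℝ _, 0 ≤ p ⬝ᵥ F *ᵥ w by
    obtain ⟨q, hq, hF⟩ := exists_mem_stdSimplex_nonneg_vecMul F this
    refine ⟨q, hq, fun k g => ?_⟩
    have := hF ⟨k, g⟩
    simp only [Pi.zero_apply, vecMul, dotProduct, F, mul_sub, sum_sub_distrib] at this
    linarith
  intro w hw
  let T (k : ι) : Matrix (α k) (α k) ℝ :=
    fun b c => ∑ g : α k → α k, if g b = c then w ⟨k, g⟩ else 0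
  have sum_T_mul (k : ι) (b : α k) (G : α k → ℝ) :
      ∑ c, T k b c * G c = ∑ g : α k → α k, G (g b) * w ⟨k, g⟩ := by
    simp only [T, sum_mul, ite_mul, zero_mul]
    rw [sum_comm]
    simp [mul_comm]
  have hT (k : ι) (b c : α k) : 0 ≤ T k b c := sum_nonneg fun g _ => by
    split_ifs
    exacts [hw.1 _, le_rfl]
  choose μ hμ hstat using fun k => exists_mem_stdSimplex_vecMul_eq_smul (T k) _ (hT k)
    fun b => by simpa using sum_T_mul k b 1
  refine ⟨fun a => ∏ i, μ i (a i), ⟨fun a => prod_nonneg fun i _ => (hμ i).1 _, ?_⟩, le_of_eq ?_⟩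
  · rw [← Fintype.prod_sum, prod_eq_one fun i _ => (hμ i).2]
  have deviation_gain (k : ι) :
      ∑ a, ∑ g : α k → α k, (∏ i, μ i (a i)) * (F a ⟨k, g⟩ * w ⟨k, g⟩) = 0 := by
    have := sum_resample_mul k (fun a => ∏ i, μ i (a i)) (T k) (u k)
    rw [resample_prod_of_vecMul_eq_smul μ (hstat k)] at this
    simp only [sum_T_mul, Pi.smul_apply, smul_eq_mul] at this
    simp only [F, sub_mul, mul_sub, sum_sub_distrib, mul_sum] at this ⊢
    rw [← this, sub_eq_zero]
    exact sum_congr rfl fun a _ => by rw [← mul_sum, ← mul_sum]; ring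
  simp only [dotProduct, mulVec, Fintype.sum_sigma, mul_sum]
  rw [sum_comm, sum_eq_zero fun k _ => deviation_gain k]

noncomputable def correlatedEquilibrium [∀ i, Nonempty (α i)] (u : ι → ((i : ι) → α i) → ℝ) :
    ((i : ι) → α i) → ℝ :=
  (exists_isCorrelatedEquilibrium u).choose

theorem isCorrelatedEquilibrium_correlatedEquilibrium [∀ i, Nonempty (α i)]
    (u : ι → ((i : ι) → α i) → ℝ) : IsCorrelatedEquilibrium u (correlatedEquilibrium u) :=
  (exists_isCorrelatedEquilibrium u).choose_spec

end NormalFormGame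

theorem ParetoDom.sum_lt {M : ℕ} {u v : Fin M → ℝ} (h : ParetoDom u v) : ∑ i, v i < ∑ i, u i :=
  let ⟨i, hi⟩ := h.2
  sum_lt_sum (fun i _ => h.1 i) ⟨i, mem_univ i, hi⟩

section MarkovGame

variable (G : MOMG N M H S A)

noncomputable def stagePayoff (h : Fin H) (W : Fin N → S → ℝ) (s : S) (k : Fin N)
    (a : (j : Fin N) → A j) : ℝ :=
  ∑ i, G.r k h s a i + ∑ s', G.P h s a s' * W k s'

theorem sum_VvecH_of_lt (k : Fin N)
    (σ : (h : Fin H) → Hist S ((j : Fin N) → A j) h.1 → ((j : Fin N) → A j) → ℝ)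
    {h : ℕ} (hlt : h < H) (hist : Hist S ((j : Fin N) → A j) h) :
    ∑ i, VvecH G k σ h hist i =
      ∑ a, σ ⟨h, hlt⟩ hist a * (∑ i, G.r k ⟨h, hlt⟩ (lastState h hist) a i +
        ∑ s', G.P ⟨h, hlt⟩ (lastState h hist) a s' * ∑ i, VvecH G k σ (h + 1) (hist, a, s') i) := by
  conv_lhs => enter [2, i]; rw [VvecH, dif_pos hlt]
  simp only [mul_add, sum_add_distrib, mul_sum]
  rw [sum_comm]
  congr 1
  rw [sum_comm]
  exact sum_congr rfl fun _ _ => sum_comm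

theorem VvecH_of_le {h : ℕ} (hle : H ≤ h) (k : Fin N)
    (σ : (h : Fin H) → Hist S ((j : Fin N) → A j) h.1 → ((j : Fin N) → A j) → ℝ)
    (hist : Hist S ((j : Fin N) → A j) h) : VvecH G k σ h hist = 0 := by
  ext i
  rw [VvecH, dif_neg (not_lt.2 hle), Pi.zero_apply]

variable [∀ j, Nonempty (A j)]

noncomputable def backwardValue (h : ℕ) (k : Fin N) (s : S) : ℝ :=
  if hlt : h < H then
    ∑ a, correlatedEquilibrium (stagePayoff G ⟨h, hlt⟩ (backwardValue (h + 1)) s) a *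
      stagePayoff G ⟨h, hlt⟩ (backwardValue (h + 1)) s k a
  else 0
termination_by H - h

noncomputable def backwardPolicy (h : Fin H) (hist : Hist S ((j : Fin N) → A j) h.1) :
    ((j : Fin N) → A j) → ℝ :=
  correlatedEquilibrium (stagePayoff G h (backwardValue G (h.1 + 1)) (lastState h.1 hist))

theorem isHistJointPolicy_backwardPolicy : IsHistJointPolicy (backwardPolicy G) :=
  fun _ _ => (isCorrelatedEquilibrium_correlatedEquilibrium _).1

theorem sum_VvecH_backwardPolicy (k : Fin N) (h : ℕ) (hist : Hist S ((j : Fin N) → A j) h) :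
    ∑ i, VvecH G k (backwardPolicy G) h hist i = backwardValue G h k (lastState h hist) := by
  by_cases hlt : h < H
  · rw [sum_VvecH_of_lt G k _ hlt, backwardValue, dif_pos hlt]
    refine sum_congr rfl fun a _ => congrArg (_ * ·) (congrArg (_ + ·) ?_)
    refine sum_congr rfl fun s' _ => ?_
    rw [sum_VvecH_backwardPolicy k (h + 1) (hist, a, s')]
    rfl
  · rw [VvecH_of_le G (not_lt.1 hlt), backwardValue, dif_neg hlt]
    simp
termination_by H - h

theorem sum_VvecH_modifyPolicy_le (k : Fin N)
    (φ : (h : Fin H) → Hist S ((j : Fin N) → A j) h.1 → A k → A k → ℝ) (hφ : IsModification φ)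
    (h : ℕ) (hist : Hist S ((j : Fin N) → A j) h) :
    ∑ i, VvecH G k (modifyPolicy k (backwardPolicy G) φ) h hist i ≤
      backwardValue G h k (lastState h hist) := by
  by_cases hlt : h < H
  · set hh : Fin H := ⟨h, hlt⟩
    set u := stagePayoff G hh (backwardValue G (h + 1)) (lastState h hist)
    have hq : IsCorrelatedEquilibrium u (backwardPolicy G hh hist) :=
      isCorrelatedEquilibrium_correlatedEquilibrium u
    rw [sum_VvecH_of_lt G k _ hlt, backwardValue, dif_pos hlt]
    -- `modifyPolicy` is `resample` of the stage equilibrium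
    calc _ ≤ ∑ a, resample k (backwardPolicy G hh hist) (φ hh hist) a * u k a := by
          refine sum_le_sum fun a _ => mul_le_mul_of_nonneg_left
            (add_le_add_right (sum_le_sum fun s' _ => mul_le_mul_of_nonneg_left
              (sum_VvecH_modifyPolicy_le k φ hφ (h + 1) _) (G.P_nonneg _ _ _ _)) _)
            (resample_nonneg hq.1.1 (fun b => (hφ hh hist b).1) a)
      _ ≤ _ := hq.sum_resample_mul_le k _ (hφ hh hist)
  · rw [VvecH_of_le G (not_lt.1 hlt), backwardValue, dif_neg hlt]
    simp
termination_by H - h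

end MarkovGame

theorem exists_PCE_general {N M H : ℕ}
    (S : Type) (A : Fin N → Type) [Fintype S]
    [∀ j, Fintype (A j)] [∀ j, Nonempty (A j)]
    (G : MOMG N M H S A) (s1 : S) :
    ∃ σ : (h : Fin H) → Hist S ((j : Fin N) → A j) h.1 → ((j : Fin N) → A j) → ℝ,
      IsHistJointPolicy σ ∧
      ∀ j, ∀ φ : (h : Fin H) → Hist S ((j' : Fin N) → A j') h.1 → A j → A j → ℝ,
        IsModification φ →
        ¬ ParetoDom (fun i => VvecH G j (modifyPolicy j σ φ) 0 s1 i)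
          (fun i => VvecH G j σ 0 s1 i) := by
  refine ⟨backwardPolicy G, isHistJointPolicy_backwardPolicy G, fun j φ hφ hdom => ?_⟩
  have hvalue := sum_VvecH_backwardPolicy G j 0 s1
  have hmodified := sum_VvecH_modifyPolicy_le G j φ hφ 0 s1
  linarith [hdom.sum_lt]

/-- **Existence of a Pareto Correlated Equilibrium.** Every finite
multi-objective Markov game has a joint (history-dependent, possibly
correlated) policy `σ` such that for every agent `j` and every stochastic
modification `φ`, `V_{j,1}^{φ ∘ σ}(s_1)` does not Pareto dominate
`V_{j,1}^σ(s_1)`. -/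
theorem exists_PCE {N M H : ℕ} (hN : 1 ≤ N) (hH : 1 ≤ H)
    (S : Type) (A : Fin N → Type) [Fintype S] [Nonempty S]
    [∀ j, Fintype (A j)] [∀ j, Nonempty (A j)]
    (G : MOMG N M H S A) (s1 : S) :
    ∃ σ : (h : Fin H) → Hist S ((j : Fin N) → A j) h.1 → ((j : Fin N) → A j) → ℝ,
      IsHistJointPolicy σ ∧
      ∀ j, ∀ φ : (h : Fin H) → Hist S ((j' : Fin N) → A j') h.1 → A j → A j → ℝ,
        IsModification φ →
        ¬ ParetoDom (fun i => VvecH G j (modifyPolicy j σ φ) 0 s1 i)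
          (fun i => VvecH G j σ 0 s1 i) :=
  exists_PCE_general S A G s1
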